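/- arXiv:1004.4302 — 4 statements merged into one kernel-verified Lean document; each statement's English description precedes it below -/
import Mathlib

section
/- Let T : ℕ × ℕ → ℤ[x,y] satisfy T(p,0) = y·(g_p(x) + y − 1) for all p, and, for all q ≥ 1 and all p, T(p,q) = T(p,q−1) + x^{q−1}·(g_{p+1}(x) + y − 1). Then for all p, q, T(p,q) = x·g_p(x)·g_q(x) + y·(g_p(x) + g_q(x) + y − 1); equivalently, (x−1)²·T(p,q) = x(x^p−1)(x^q−1) + y(x−1)(x^p + x^q + xy − x − y − 1). (This is the paper's closed formula for the Tutte polynomial of the graph of the link family p 1 q, derived from the recurrence T(G(p 1 q)) − T(G(p 1 (q−1))) = x^{q−1}·T(G(p+1)).) -/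
noncomputable section
open MvPolynomial Finset

abbrev R : Type := MvPolynomial (Fin 2) ℤ

def x : R := X 0
def y : R := X 1

/-- geometric sum `g n t = ∑_{i=0}^{n-1} t^i` -/
def g (n : ℕ) (t : R) : R := ∑ i ∈ Finset.range n, t ^ i

section

variable (t s : R)

@[simp]
theorem g_zero : g 0 t = 0 := Finset.sum_range_zero _

theorem g_succ (n : ℕ) : g (n + 1) t = g n t + t ^ n := Finset.sum_range_succ _ n

theorem sub_one_mul_g (n : ℕ) : (t - 1) * g n t = t ^ n - 1 := mul_geom_sum t n

theorem eq_closedForm_of_recurrence (T : ℕ → ℕ → R)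
    (h0 : ∀ p, T p 0 = s * (g p t + s - 1))
    (hsucc : ∀ p q, T p (q + 1) = T p q + t ^ q * (g (p + 1) t + s - 1)) (p q : ℕ) :
    T p q = t * g p t * g q t + s * (g p t + g q t + s - 1) := by
  induction q with
  | zero => simp [h0]
  | succ q ih =>
    rw [hsucc, ih, g_succ, g_succ]
    linear_combination (-t ^ q) * sub_one_mul_g t p

theorem sub_one_sq_mul_closedForm (p q : ℕ) :
    (t - 1) ^ 2 * (t * g p t * g q t + s * (g p t + g q t + s - 1)) =
      t * (t ^ p - 1) * (t ^ q - 1) + s * (t - 1) * (t ^ p + t ^ q + t * s - t - s - 1) := by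
  linear_combination (t * ((t - 1) * g q t) + s * (t - 1)) * sub_one_mul_g t p
    + (t * (t ^ p - 1) + s * (t - 1)) * sub_one_mul_g t q

end

theorem stmt2 (T : ℕ → ℕ → R)
    (h0 : ∀ p, T p 0 = y * (g p x + y - 1))
    (hrec : ∀ p q, 1 ≤ q → T p q = T p (q - 1) + x ^ (q - 1) * (g (p + 1) x + y - 1)) :
    ∀ p q, T p q = x * g p x * g q x + y * (g p x + g q x + y - 1) ∧
      (x - 1) ^ 2 * T p q =
        x * (x ^ p - 1) * (x ^ q - 1)
          + y * (x - 1) * (x ^ p + x ^ q + x * y - x - y - 1) := by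
  intro p q
  have hT := eq_closedForm_of_recurrence x y T h0
    (fun p q => hrec p (q + 1) q.succ_pos) p q
  exact ⟨hT, hT ▸ sub_one_sq_mul_closedForm x y p q⟩
end
end

section
/- Let T : ℕ³ → ℤ[x,y] satisfy T(0,q,r) = y^q·(g_r(x) + y − 1) for all q, r, and, for all p ≥ 1 and all q, r, T(p,q,r) = T(p−1,q,r) + x^{p−1}·(g_r(x)·g_q(y) + x^r + y^q − 1). Then for all p, q, r, T(p,q,r) = (x+y)·g_p(x)·g_r(x) + y^q·(x·g_r(x) + g_p(x)) + g_p(x)·g_r(x)·(g_q(y) − y − 1) − (x^r − y)·y^q. (This is the paper's closed formula for the Tutte polynomial of the graph of the rational link family p q r: the three displayed fractions (x+y)(x^p−1)(x^r−1)/(x−1)², y^q(x^{r+1}+x^p−x−1)/(x−1) and (x^p−1)(x^r−1)(y^q−y²)/((x−1)²(y−1)) equal the corresponding geometric-sum expressions; it is derived from the recurrence T(G(p q r)) − T(G((p−1) q r)) = x^{p−1}·T(G(r q)), where T(G(r q)) = g_r(x)g_q(y) + x^r + y^q − 1 is the family-p q formula.) -/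
noncomputable section
open MvPolynomial Finset

theorem g_mul_sub_one (n : ℕ) (t : R) : g n t * (t - 1) = t ^ n - 1 :=
  geom_sum_mul t n

theorem eq_add_geom_sum_mul_of_succ {A : Type*} [Ring A] (a : ℕ → A) (t c : A)
    (h : ∀ n, a (n + 1) = a n + t ^ n * c) (n : ℕ) :
    a n = a 0 + (∑ i ∈ range n, t ^ i) * c := by
  rw [eq_sum_range_sub a n, sum_mul]
  simp only [h, add_sub_cancel_left]

theorem stmt3 (T : ℕ → ℕ → ℕ → R)
    (h0 : ∀ q r, T 0 q r = y ^ q * (g r x + y - 1))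
    (hrec : ∀ p q r, 1 ≤ p →
      T p q r = T (p - 1) q r + x ^ (p - 1) * (g r x * g q y + x ^ r + y ^ q - 1)) :
    ∀ p q r, T p q r =
      (x + y) * g p x * g r x + y ^ q * (x * g r x + g p x)
        + g p x * g r x * (g q y - y - 1) - (x ^ r - y) * y ^ q := by
  intro p q r
  have hT : T p q r = T 0 q r + g p x * (g r x * g q y + x ^ r + y ^ q - 1) :=
    eq_add_geom_sum_mul_of_succ (T · q r) x _
      (fun n => by simpa using hrec (n + 1) q r n.succ_pos) p
  rw [hT, h0]
  linear_combination -(g p x + y ^ q) * g_mul_sub_one r x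
end
end

section
/- Let T : ℕ³ → ℤ[x,y] satisfy T(0,q,r) = (g_q(x) + y − 1)·(g_r(x) + y − 1) for all q, r, and, for all p ≥ 1 and all q, r, T(p,q,r) = T(p−1,q,r) + x^{p−1}·(g_{q+r}(x) + y − 1). Then for all p, q, r, (x−1)²·T(p,q,r) = x^{p+q+r} + (x^{p+1} + x^{q+1} + x^{r+1})(y−1) − (x^p + x^q + x^r)·y + (xy − x − y)(xy − x − y − 1). (This is the paper's closed formula for the Tutte polynomial of the graph of the pretzel link family p,q,r, derived from the recurrence T(G(p,q,r)) − T(G(p−1,q,r)) = x^{p−1}·T(G(q+r)).) -/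
noncomputable section
open MvPolynomial Finset

/-! Multiplying by `x - 1` turns the Tutte polynomial `g n x + y - 1` of the `n`-cycle into
`x ^ n + (x * y - x - y)`; after that, both the base case and the step of the induction on `p`
are polynomial identities. -/

theorem sub_one_mul_cycle (n : ℕ) : (x - 1) * (g n x + y - 1) = x ^ n + (x * y - x - y) := by
  unfold g
  linear_combination mul_geom_sum x n

theorem stmt4 (T : ℕ → ℕ → ℕ → R)
    (h0 : ∀ q r, T 0 q r = (g q x + y - 1) * (g r x + y - 1))
    (hrec : ∀ p q r, 1 ≤ p →
      T p q r = T (p - 1) q r + x ^ (p - 1) * (g (q + r) x + y - 1)) :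
    ∀ p q r, (x - 1) ^ 2 * T p q r =
      x ^ (p + q + r) + (x ^ (p + 1) + x ^ (q + 1) + x ^ (r + 1)) * (y - 1)
        - (x ^ p + x ^ q + x ^ r) * y
        + (x * y - x - y) * (x * y - x - y - 1) := by
  intro p q r
  induction p with
  | zero =>
    rw [h0]
    linear_combination (x - 1) * (g r x + y - 1) * sub_one_mul_cycle q
      + (x ^ q + (x * y - x - y)) * sub_one_mul_cycle r
  | succ p ih =>
    rw [hrec (p + 1) q r p.succ_pos, Nat.add_sub_cancel]
    linear_combination ih + x ^ p * (x - 1) * sub_one_mul_cycle (q + r)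
end
end

section
/- Let T : ℕ → ℤ[x,y] satisfy T(1) = 2x + 3x² + x³ + 2y + 4xy + 3y² + y³ and, for all p ≥ 2, T(p) = T(p−1) + x^{p−1}·(x + 2x² + x³ + y + 2xy + y²). Then for all p ≥ 1, (x−1)·T(p) = x^p·(2x³ + 2x² + y² + 2xy + y) − (2x² + 2x + y² + y + 2xy) − x^{p+1}(x+1)(x−1) + (y + 2xy + 2y² + y³)(x−1). (This is the paper's closed formula for the Tutte polynomial of the graphs G(.p) of the polyhedral link family .p, derived from the recurrence T(G(.p)) − T(G(.(p−1))) = x^{p−1}·T(G(.0)) with T(G(.0)) = x+2x²+x³+y+2xy+y² and T(G(.1)) = 2x+3x²+x³+2y+4xy+3y²+y³.) -/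
/-! The recurrence telescopes to `T p = T 1 + (x + x² + ⋯ + x^(p-1)) · T(G(.0))`; multiplying by
`x - 1` sums the geometric series, and the closed form is then a polynomial identity. -/

noncomputable section
open MvPolynomial Finset

theorem sub_one_mul_eq_of_eq_add_pow_mul {A : Type*} [CommRing A] (T : ℕ → A) (a c : A)
    (hrec : ∀ p, 2 ≤ p → T p = T (p - 1) + a ^ (p - 1) * c) :
    ∀ p, 1 ≤ p → (a - 1) * T p = (a - 1) * T 1 + (a ^ p - a) * c := by
  intro p hp
  induction p, hp using Nat.le_induction with
  | base => ring
  | succ n hn ih =>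
    rw [hrec (n + 1) (by omega), Nat.add_sub_cancel, mul_add, ih]
    ring

theorem stmt5 (T : ℕ → R)
    (h1 : T 1 = 2 * x + 3 * x ^ 2 + x ^ 3 + 2 * y + 4 * x * y + 3 * y ^ 2 + y ^ 3)
    (hrec : ∀ p, 2 ≤ p →
      T p = T (p - 1) + x ^ (p - 1) * (x + 2 * x ^ 2 + x ^ 3 + y + 2 * x * y + y ^ 2)) :
    ∀ p, 1 ≤ p →
      (x - 1) * T p =
        x ^ p * (2 * x ^ 3 + 2 * x ^ 2 + y ^ 2 + 2 * x * y + y)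
          - (2 * x ^ 2 + 2 * x + y ^ 2 + y + 2 * x * y)
          - x ^ (p + 1) * (x + 1) * (x - 1)
          + (y + 2 * x * y + 2 * y ^ 2 + y ^ 3) * (x - 1) := by
  intro p hp
  rw [sub_one_mul_eq_of_eq_add_pow_mul T x _ hrec p hp, h1]
  ring
end
end
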